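/- Let p > 25/12, m₀ ≥ 1, and m satisfy m₀(3p−4)/(4(p−1)) + (p−2)/(p−1) < m ≤ m₀(p−4/3) + 3(p−2). Set β = m + 1/(p−1) − 1, m* = (m−2)/p + 1, α = 4(p−1)/(3p−4), and θ = 3(m+p−2)(4m(p−1)+m₀(4−3p)−4p+8) / (4(m(p−1)−p+2)(3m+(m₀+3)p−3(m₀+2))). Then θ ∈ (0,1) and m*/(βα) = θ·(1/p − 1/3) + (1−θ)·m*/m₀. -/

import Mathlib

/-!
Write `A = m(p-1) - p + 2` and `C = m + p - 2`. Then `β α = 4A/(3p-4)`, `m* = C/p`, and the two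
factors of the denominator and numerator of `θ` split as `3C + m₀(p-3)` and `4A - m₀(3p-4)`.
In these variables the identity is a rational identity in `p, m₀, A, C`. Together with `p > 2`,
the lower bound on `m` makes `A`, `C` and both factors positive, and `1 - θ` has numerator
`m₀ (4A(p-3) + 3C(3p-4)) = m₀ p (m(4p-7) + 5(p-2)) > 0`, so `θ ∈ (0, 1)`.
-/

/-- The paper's `θ`, with `A = m(p-1) - p + 2` and `C = m + p - 2`. -/
noncomputable def interpolationTheta (p m₀ A C : ℝ) : ℝ :=
  3 * C * (4 * A - m₀ * (3 * p - 4)) / (4 * A * (3 * C + m₀ * (p - 3)))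

section
variable {p m₀ A C : ℝ}

lemma div_eq_interpolationTheta_combination (hp : p ≠ 0) (hm₀ : m₀ ≠ 0) (hA : A ≠ 0)
    (hD : 3 * C + m₀ * (p - 3) ≠ 0) :
    C / p / (4 * A / (3 * p - 4)) = interpolationTheta p m₀ A C * (1 / p - 1 / 3) +
      (1 - interpolationTheta p m₀ A C) * (C / p / m₀) := by
  unfold interpolationTheta
  -- `field_simp` does not recognise the hypothesis `hD` on the unnamed denominator
  generalize hD_def : 3 * C + m₀ * (p - 3) = D at hD ⊢
  field_simp
  subst hD_def
  ring

lemma interpolationTheta_mem_Ioo (hm₀ : 0 < m₀) (hA : 0 < A) (hC : 0 < C)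
    (hB : m₀ * (3 * p - 4) < 4 * A) (hD : 0 < 3 * C + m₀ * (p - 3))
    (hE : 0 < 4 * A * (p - 3) + 3 * C * (3 * p - 4)) :
    interpolationTheta p m₀ A C ∈ Set.Ioo 0 1 := by
  have hden : 0 < 4 * A * (3 * C + m₀ * (p - 3)) := by positivity
  refine ⟨div_pos (by nlinarith) hden, (div_lt_one hden).2 ?_⟩
  nlinarith [mul_pos hm₀ hE]

end

lemma mul_lt_four_mul_of_add_div_lt {p m₀ m : ℝ} (hp : 1 < p)
    (hm : m₀ * (3 * p - 4) / (4 * (p - 1)) + (p - 2) / (p - 1) < m) :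
    m₀ * (3 * p - 4) < 4 * (m * (p - 1) - p + 2) := by
  have hp1 : 0 < p - 1 := by linarith
  rw [div_add_div _ _ (by positivity) hp1.ne', div_lt_iff₀ (by positivity)] at hm
  nlinarith

lemma three_mul_add_mul_pos {p m₀ m : ℝ} (hp : 2 < p) (hm₀ : 0 < m₀)
    (hB : m₀ * (3 * p - 4) < 4 * (m * (p - 1) - p + 2)) :
    0 < 3 * (m + p - 2) + m₀ * (p - 3) := by
  -- `4(p-1)(3(m+p-2) + m₀(p-3)) > 3 m₀ (3p-4) + 4(p-1) m₀ (p-3) = m₀ p (4p-7)`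
  have : 0 < 4 * (p - 1) * (3 * (m + p - 2) + m₀ * (p - 3)) := by
    nlinarith [mul_pos hm₀ (by nlinarith : 0 < p * (4 * p - 7))]
  exact pos_of_mul_pos_right this (by linarith)

theorem stmt_11_general (p m₀ m : ℝ) (hp : 25 / 12 < p) (hm₀ : 1 ≤ m₀)
    (hm1 : m₀ * (3 * p - 4) / (4 * (p - 1)) + (p - 2) / (p - 1) < m) :
    let β := m + 1 / (p - 1) - 1
    let mstar := (m - 2) / p + 1
    let α := 4 * (p - 1) / (3 * p - 4)
    let θ := 3 * (m + p - 2) * (4 * m * (p - 1) + m₀ * (4 - 3 * p) - 4 * p + 8) /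
      (4 * (m * (p - 1) - p + 2) * (3 * m + (m₀ + 3) * p - 3 * (m₀ + 2)))
    θ ∈ Set.Ioo (0:ℝ) 1 ∧
    mstar / (β * α) = θ * (1 / p - 1 / 3) + (1 - θ) * (mstar / m₀) := by
  intro β mstar α θ
  set A := m * (p - 1) - p + 2
  set C := m + p - 2
  have hB : m₀ * (3 * p - 4) < 4 * A := mul_lt_four_mul_of_add_div_lt (by linarith) hm1
  have hm : 0 < m := by nlinarith
  have hA : 0 < A := by nlinarith
  have hC : 0 < C := by linarith
  have hD : 0 < 3 * C + m₀ * (p - 3) := three_mul_add_mul_pos (by linarith) (by linarith) hB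
  have hE : 0 < 4 * A * (p - 3) + 3 * C * (3 * p - 4) := by
    have : 4 * A * (p - 3) + 3 * C * (3 * p - 4) = p * (m * (4 * p - 7) + 5 * (p - 2)) := by ring
    rw [this]
    exact mul_pos (by linarith) (by nlinarith)
  have hθ : θ = interpolationTheta p m₀ A C := by simp only [θ, interpolationTheta]; ring
  have hmstar : mstar = C / p := by simp only [mstar]; field_simp; ring
  have hβα : β * α = 4 * A / (3 * p - 4) := by
    have hp1 : p - 1 ≠ 0 := by linarith
    simp only [β, α]; field_simp; ring
  rw [hθ, hmstar, hβα]
  exact ⟨interpolationTheta_mem_Ioo (by linarith) hA hC hB hD hE,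
    div_eq_interpolationTheta_combination (by positivity) (by positivity) hA.ne' hD.ne'⟩

theorem stmt_11 (p m₀ m : ℝ) (hp : 25 / 12 < p) (hm₀ : 1 ≤ m₀)
    (hm1 : m₀ * (3 * p - 4) / (4 * (p - 1)) + (p - 2) / (p - 1) < m)
    (hm2 : m ≤ m₀ * (p - 4 / 3) + 3 * (p - 2)) :
    let β := m + 1 / (p - 1) - 1
    let mstar := (m - 2) / p + 1
    let α := 4 * (p - 1) / (3 * p - 4)
    let θ := 3 * (m + p - 2) * (4 * m * (p - 1) + m₀ * (4 - 3 * p) - 4 * p + 8) /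
      (4 * (m * (p - 1) - p + 2) * (3 * m + (m₀ + 3) * p - 3 * (m₀ + 2)))
    θ ∈ Set.Ioo (0:ℝ) 1 ∧
    mstar / (β * α) = θ * (1 / p - 1 / 3) + (1 - θ) * (mstar / m₀) :=
  stmt_11_general p m₀ m hp hm₀ hm1
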